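/- In a cartesian differential category, the natural transformation t_{X,Y} = ⟨⟨0, π₁∘π₂⟩, ⟨π₁, π₂∘π₂⟩⟩ : X×TY → T(X×Y) is a tensorial strength for the tangent bundle monad (T, η, μ): it satisfies the unit-object law T(ℓ_X) = t_{1,X}∘ℓ_{TX}, the associativity law t_{X,Y×Z}∘(id×t_{Y,Z})∘a = T(a)∘t_{X×Y,Z}, the unit law t_{X,Y}∘(id×η_Y) = η_{X×Y}, and the multiplication law μ_{X×Y}∘T(t_{X,Y})∘t_{X,TY} = t_{X,Y}∘(id×μ_Y). -/

import Mathlib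

open CategoryTheory

universe v u

/-- Hom-sets carry a commutative additive monoid structure. -/
class HomAdd (C : Type u) [Category.{v} C] where
  homMonoid : ∀ X Y : C, AddCommMonoid (X ⟶ Y)

attribute [instance] HomAdd.homMonoid

/-- A morphism is additive if it preserves the additive structure under
precomposition. -/
def IsAdditive {C : Type u} [Category.{v} C] [HomAdd C] {X Y : C} (f : X ⟶ Y) : Prop :=
  (∀ {W : C} (g h : W ⟶ X), (g + h) ≫ f = g ≫ f + h ≫ f) ∧
  (∀ {W : C}, (0 : W ⟶ X) ≫ f = 0)

/-- A cartesian left-additive category: a category with chosen finite products,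
hom-sets commutative monoids, composition is left-additive (precomposition
preserves sums), projections are additive, and pairings of additive
morphisms are additive. -/
class CLAC (C : Type u) [Category.{v} C] extends HomAdd C where
  P : C → C → C
  p1 : ∀ {X Y : C}, P X Y ⟶ X
  p2 : ∀ {X Y : C}, P X Y ⟶ Y
  pair : ∀ {Z X Y : C}, (Z ⟶ X) → (Z ⟶ Y) → (Z ⟶ P X Y)
  pair_fst : ∀ {Z X Y : C} (f : Z ⟶ X) (g : Z ⟶ Y), pair f g ≫ p1 = f
  pair_snd : ∀ {Z X Y : C} (f : Z ⟶ X) (g : Z ⟶ Y), pair f g ≫ p2 = g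
  pair_ext : ∀ {Z X Y : C} (h k : Z ⟶ P X Y),
    h ≫ p1 = k ≫ p1 → h ≫ p2 = k ≫ p2 → h = k
  one : C
  bang : ∀ X : C, X ⟶ one
  bang_unique : ∀ {X : C} (f : X ⟶ one), f = bang X
  comp_add : ∀ {X Y Z : C} (f : X ⟶ Y) (g h : Y ⟶ Z),
    f ≫ (g + h) = f ≫ g + f ≫ h
  comp_zero : ∀ {X Y Z : C} (f : X ⟶ Y), f ≫ (0 : Y ⟶ Z) = 0
  p1_additive : ∀ {X Y : C}, IsAdditive (p1 (X := X) (Y := Y))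
  p2_additive : ∀ {X Y : C}, IsAdditive (p2 (X := X) (Y := Y))
  pair_additive : ∀ {Z X Y : C} (f : Z ⟶ X) (g : Z ⟶ Y),
    IsAdditive f → IsAdditive g → IsAdditive (pair f g)

namespace CLAC

variable {C : Type u} [Category.{v} C] [CLAC C]

/-- The product of two morphisms, `f × g = ⟨f ∘ π₁, g ∘ π₂⟩`. -/
def prodMor {W X Y Z : C} (f : W ⟶ Y) (g : X ⟶ Z) : P W X ⟶ P Y Z :=
  pair (p1 ≫ f) (p2 ≫ g)

end CLAC

open CLAC

/-- A cartesian differential category: a cartesian left-additive category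
equipped with a differential operator `D` satisfying axioms D1–D7. -/
class CDC (C : Type u) [Category.{v} C] extends CLAC C where
  D : ∀ {X Y : C}, (X ⟶ Y) → (P X X ⟶ Y)
  D1 : ∀ {X Y : C} (f g : X ⟶ Y), D (f + g) = D f + D g
  D1' : ∀ {X Y : C}, D (0 : X ⟶ Y) = 0
  D2 : ∀ {W X Y : C} (f : X ⟶ Y) (h k v : W ⟶ X),
    pair (h + k) v ≫ D f = pair h v ≫ D f + pair k v ≫ D f
  D2' : ∀ {W X Y : C} (f : X ⟶ Y) (v : W ⟶ X), pair 0 v ≫ D f = 0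
  D3 : ∀ {X : C}, D (𝟙 X) = p1
  D3₁ : ∀ {X Y : C}, D (p1 (X := X) (Y := Y)) = p1 ≫ p1
  D3₂ : ∀ {X Y : C}, D (p2 (X := X) (Y := Y)) = p1 ≫ p2
  D4 : ∀ {Z X Y : C} (f : Z ⟶ X) (g : Z ⟶ Y), D (pair f g) = pair (D f) (D g)
  D5 : ∀ {X Y Z : C} (g : X ⟶ Y) (f : Y ⟶ Z),
    D (g ≫ f) = pair (D g) (p2 ≫ g) ≫ D f
  D6 : ∀ {W X Y : C} (f : X ⟶ Y) (g h k : W ⟶ X),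
    pair (pair g 0) (pair h k) ≫ D (D f) = pair g k ≫ D f
  D7 : ∀ {W X Y : C} (f : X ⟶ Y) (g h k : W ⟶ X),
    pair (pair 0 h) (pair g k) ≫ D (D f) = pair (pair 0 g) (pair h k) ≫ D (D f)

namespace CDC

variable {C : Type u} [Category.{v} C] [CDC C]

/-- The tangent bundle functor on morphisms: `T(f) = ⟨D(f), f ∘ π₂⟩`. -/
def Tm {X Y : C} (f : X ⟶ Y) : P X X ⟶ P Y Y :=
  pair (D f) (p2 ≫ f)

/-- The unit `η_X = ⟨0, id⟩ : X ⟶ TX`. -/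
def η (X : C) : X ⟶ P X X := pair 0 (𝟙 X)

/-- The multiplication `μ_X = ⟨π₂∘π₁ + π₁∘π₂, π₂∘π₂⟩ : TTX ⟶ TX`. -/
def μ (X : C) : P (P X X) (P X X) ⟶ P X X :=
  pair (p1 ≫ p2 + p2 ≫ p1) (p2 ≫ p2)

/-- The (right) tensorial strength `t_{X,Y} = ⟨⟨0, π₁∘π₂⟩, ⟨π₁, π₂∘π₂⟩⟩`. -/
def t (X Y : C) : P X (P Y Y) ⟶ P (P X Y) (P X Y) :=
  pair (pair 0 (p2 ≫ p1)) (pair p1 (p2 ≫ p2))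

/-- The left tensorial strength `t'_{X,Y} = ⟨⟨π₁∘π₁, 0⟩, ⟨π₂∘π₁, π₂⟩⟩`. -/
def t' (X Y : C) : P (P X X) Y ⟶ P (P X Y) (P X Y) :=
  pair (pair (p1 ≫ p1) 0) (pair (p1 ≫ p2) p2)

/-- The distributivity isomorphism
`σ = ⟨⟨π₁∘π₁, π₁∘π₂⟩, ⟨π₂∘π₁, π₂∘π₂⟩⟩ : (A×B)×(E×F) ⟶ (A×E)×(B×F)`. -/
def Sig (A B E F : C) : P (P A B) (P E F) ⟶ P (P A E) (P B F) :=
  pair (pair (p1 ≫ p1) (p2 ≫ p1)) (pair (p1 ≫ p2) (p2 ≫ p2))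

/-- The symmetry `c_{X,Y} = ⟨π₂, π₁⟩`. -/
def symm (X Y : C) : P X Y ⟶ P Y X := pair p2 p1

/-- The left unitor `ℓ_X = ⟨!_X, id⟩ : X ⟶ 1 × X`. -/
def lUnit (X : C) : X ⟶ P one X := pair (bang X) (𝟙 X)

/-- The associator `a_{X,Y,Z} = ⟨π₁∘π₁, ⟨π₂∘π₁, π₂⟩⟩`. -/
def assoc (X Y Z : C) : P (P X Y) Z ⟶ P X (P Y Z) :=
  pair (p1 ≫ p1) (pair (p1 ≫ p2) p2)

/-- The monoidal structure map `ψ_{X,Y} = ⟨π₁×π₁, π₂×π₂⟩ : TX×TY ⟶ T(X×Y)`. -/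
def ψ (X Y : C) : P (P X X) (P Y Y) ⟶ P (P X Y) (P X Y) :=
  pair (prodMor p1 p1) (prodMor p2 p2)

end CDC

open CDC

/-! The structural maps `ℓ`, `a` and `t` are linear in the sense of cartesian differential
categories (`D f = f ∘ π₁`), so `T` acts on them as `f × f`. After this substitution no derivative
is left, and each law is an identity between maps built from projections, pairings, zeros and
sums, which is checked componentwise. -/

namespace CLAC

variable {C : Type u} [Category.{v} C] [CLAC C]

attribute [simp] pair_fst pair_snd comp_zero comp_add

@[simp]
lemma pair_fst_assoc {Z X Y W : C} (f : Z ⟶ X) (g : Z ⟶ Y) (h : X ⟶ W) :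
    pair f g ≫ p1 ≫ h = f ≫ h := by
  rw [← Category.assoc, pair_fst]

@[simp]
lemma pair_snd_assoc {Z X Y W : C} (f : Z ⟶ X) (g : Z ⟶ Y) (h : Y ⟶ W) :
    pair f g ≫ p2 ≫ h = g ≫ h := by
  rw [← Category.assoc, pair_snd]

@[simp]
lemma comp_pair {W Z X Y : C} (h : W ⟶ Z) (f : Z ⟶ X) (g : Z ⟶ Y) :
    h ≫ pair f g = pair (h ≫ f) (h ≫ g) :=
  pair_ext _ _ (by simp) (by simp)

@[simp]
lemma add_comp_p1 {W X Y : C} (g h : W ⟶ P X Y) : (g + h) ≫ p1 = g ≫ p1 + h ≫ p1 :=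
  p1_additive.1 g h

@[simp]
lemma add_comp_p2 {W X Y : C} (g h : W ⟶ P X Y) : (g + h) ≫ p2 = g ≫ p2 + h ≫ p2 :=
  p2_additive.1 g h

@[simp]
lemma zero_comp_p1 {W X Y : C} : (0 : W ⟶ P X Y) ≫ p1 = 0 := p1_additive.2

@[simp]
lemma zero_comp_p2 {W X Y : C} : (0 : W ⟶ P X Y) ≫ p2 = 0 := p2_additive.2

lemma eq_of_to_one {X : C} (f g : X ⟶ one) : f = g := by
  rw [bang_unique f, bang_unique g]

end CLAC

namespace CDC

variable {C : Type u} [Category.{v} C] [CDC C]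

def IsLinear {X Y : C} (f : X ⟶ Y) : Prop := D f = p1 ≫ f

lemma isLinear_id {X : C} : IsLinear (𝟙 X) := by
  rw [IsLinear, D3, Category.comp_id]

lemma isLinear_fst {X Y : C} : IsLinear (p1 : P X Y ⟶ X) := D3₁

lemma isLinear_snd {X Y : C} : IsLinear (p2 : P X Y ⟶ Y) := D3₂

lemma isLinear_zero {X Y : C} : IsLinear (0 : X ⟶ Y) := by
  rw [IsLinear, D1', comp_zero]

lemma isLinear_bang {X : C} : IsLinear (bang X) := eq_of_to_one _ _

lemma IsLinear.comp {X Y Z : C} {f : X ⟶ Y} {g : Y ⟶ Z} (hf : IsLinear f) (hg : IsLinear g) :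
    IsLinear (f ≫ g) := by
  rw [IsLinear, D5, hf, hg]
  simp

lemma IsLinear.pair {X Y Z : C} {f : X ⟶ Y} {g : X ⟶ Z} (hf : IsLinear f) (hg : IsLinear g) :
    IsLinear (pair f g) := by
  rw [IsLinear, D4, hf, hg, comp_pair]

lemma IsLinear.Tm_eq {X Y : C} {f : X ⟶ Y} (hf : IsLinear f) : Tm f = prodMor f f := by
  rw [Tm, hf, prodMor]

lemma isLinear_lUnit (X : C) : IsLinear (lUnit X) := isLinear_bang.pair isLinear_id

lemma isLinear_assoc (X Y Z : C) : IsLinear (assoc X Y Z) :=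
  (isLinear_fst.comp isLinear_fst).pair ((isLinear_fst.comp isLinear_snd).pair isLinear_snd)

lemma isLinear_t (X Y : C) : IsLinear (t X Y) :=
  (isLinear_zero.pair (isLinear_snd.comp isLinear_fst)).pair
    (isLinear_fst.pair (isLinear_snd.comp isLinear_snd))

lemma lUnit_comp_t (X : C) : lUnit (P X X) ≫ t one X = Tm (lUnit X) := by
  rw [(isLinear_lUnit X).Tm_eq]
  refine pair_ext _ _ (pair_ext _ _ ?_ ?_) (pair_ext _ _ ?_ ?_) <;> simp [lUnit, t, prodMor]
  all_goals exact eq_of_to_one _ _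

lemma assoc_comp_prodMor_t_comp_t (X Y Z : C) :
    assoc X Y (P Z Z) ≫ prodMor (𝟙 X) (t Y Z) ≫ t X (P Y Z) =
      t (P X Y) Z ≫ Tm (assoc X Y Z) := by
  rw [(isLinear_assoc X Y Z).Tm_eq]
  refine pair_ext _ _ (pair_ext _ _ ?_ ?_) (pair_ext _ _ ?_ ?_) <;> simp [assoc, t, prodMor]

lemma prodMor_η_comp_t (X Y : C) : prodMor (𝟙 X) (η Y) ≫ t X Y = η (P X Y) := by
  refine pair_ext _ _ (pair_ext _ _ ?_ ?_) (pair_ext _ _ ?_ ?_) <;> simp [η, t, prodMor]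

lemma t_comp_Tm_t_comp_μ (X Y : C) :
    t X (P Y Y) ≫ Tm (t X Y) ≫ μ (P X Y) = prodMor (𝟙 X) (μ Y) ≫ t X Y := by
  rw [(isLinear_t X Y).Tm_eq]
  refine pair_ext _ _ (pair_ext _ _ ?_ ?_) (pair_ext _ _ ?_ ?_) <;> simp [μ, t, prodMor]

end CDC

variable {C : Type u} [Category.{v} C] [CDC C]

/-- `t` is a tensorial strength for the tangent bundle monad: the
unit-object law, associativity law, unit law and multiplication law hold. -/
theorem t_strength (X Y Z : C) :
    lUnit (P X X) ≫ t one X = Tm (lUnit X) ∧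
    assoc X Y (P Z Z) ≫ prodMor (𝟙 X) (t Y Z) ≫ t X (P Y Z) =
      t (P X Y) Z ≫ Tm (assoc X Y Z) ∧
    prodMor (𝟙 X) (η Y) ≫ t X Y = η (P X Y) ∧
    t X (P Y Y) ≫ Tm (t X Y) ≫ μ (P X Y) = prodMor (𝟙 X) (μ Y) ≫ t X Y :=
  ⟨lUnit_comp_t X, assoc_comp_prodMor_t_comp_t X Y Z, prodMor_η_comp_t X Y, t_comp_Tm_t_comp_μ X Y⟩
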